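/- For every closed session type T, exactly one of '& ∈ T' and '& ∉ T' holds: & ∈ T holds if and only if & ∉ T does not hold. -/

import Mathlib

/-- Session types with de Bruijn indices for recursion variables.
`branch`/`select` carry lists of (label, carried type, continuation). -/
inductive SessionType : Type where
  | done : SessionType
  | var : Nat → SessionType
  | mu : SessionType → SessionType
  | branch : List (Nat × SessionType × SessionType) → SessionType
  | select : List (Nat × SessionType × SessionType) → SessionType

abbrev SEntry := Nat × SessionType × SessionType

namespace SessionType

mutual
def subst (x : Nat) (U : SessionType) : SessionType → SessionType
  | .done => .done
  | .var n => if n = x then U else .var n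
  | .mu T => .mu (subst (x+1) U T)
  | .branch bs => .branch (substList x U bs)
  | .select bs => .select (substList x U bs)
def substList (x : Nat) (U : SessionType) : List SEntry → List SEntry
  | [] => []
  | (l, s, t) :: rest => (l, subst x U s, subst x U t) :: substList x U rest
end

mutual
def dual : SessionType → SessionType
  | .done => .done
  | .var n => .var n
  | .mu T => .mu (dual T)
  | .branch bs => .select (dualList bs)
  | .select bs => .branch (dualList bs)
def dualList : List SEntry → List SEntry
  | [] => []
  | (l, s, t) :: rest => (l, s, dual t) :: dualList rest
end

mutual
def fvBelow (k : Nat) : SessionType → Bool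
  | .done => true
  | .var n => decide (n < k)
  | .mu T => fvBelow (k+1) T
  | .branch bs => fvBelowList k bs
  | .select bs => fvBelowList k bs
def fvBelowList (k : Nat) : List SEntry → Bool
  | [] => true
  | (_, s, t) :: rest => fvBelow k s && fvBelow k t && fvBelowList k rest
end

/-- Closed session types (no free recursion variables). -/
def ClosedTy (T : SessionType) : Prop := fvBelow 0 T = true

end SessionType

open SessionType

/-- The equi-recursive unfolding of `μt.T` (body `T`): `T[μt.T/t]`. -/
def unfoldMu (T : SessionType) : SessionType := subst 0 (.mu T) T

/-- One step of the coinductive synchronous subtyping rules (sub-end, sub-bra, sub-sel),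
with the equi-recursive identification of a μ-type with its unfolding. -/
def SubSF (R : SessionType → SessionType → Prop) (T S : SessionType) : Prop :=
  (T = .done ∧ S = .done) ∨
  (∃ bs bs', T = .branch bs ∧ S = .branch bs' ∧
    ∀ e' ∈ bs', ∃ e ∈ bs, e.1 = e'.1 ∧ R e.2.1 e'.2.1 ∧ R e.2.2 e'.2.2) ∨
  (∃ bs bs', T = .select bs ∧ S = .select bs' ∧
    ∀ e ∈ bs, ∃ e' ∈ bs', e.1 = e'.1 ∧ R e'.2.1 e.2.1 ∧ R e.2.2 e'.2.2) ∨
  (∃ T', T = .mu T' ∧ R (unfoldMu T') S) ∨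
  (∃ S', S = .mu S' ∧ R T (unfoldMu S'))

/-- Synchronous session subtyping `≤s`: greatest fixpoint of `SubSF`. -/
def SubS (T S : SessionType) : Prop :=
  ∃ R, R T S ∧ ∀ a b, R a b → SubSF R a b

/-- Asynchronous contexts: finite trees of branchings with indexed holes. -/
inductive ACtx : Type where
  | hole : Nat → ACtx
  | branch : List (Nat × SessionType × ACtx) → ACtx

abbrev AEntry := Nat × SessionType × ACtx

mutual
/-- Fill each hole `[]^n` of a context with `f n`. -/
def fillA (f : Nat → SessionType) : ACtx → SessionType
  | .hole n => f n
  | .branch bs => .branch (fillAList f bs)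
def fillAList (f : Nat → SessionType) : List AEntry → List SEntry
  | [] => []
  | (l, s, A) :: rest => (l, s, fillA f A) :: fillAList f rest
end

mutual
/-- The hole indices of an asynchronous context. -/
def holesA : ACtx → List Nat
  | .hole n => [n]
  | .branch bs => holesAList bs
def holesAList : List AEntry → List Nat
  | [] => []
  | (_, _, A) :: rest => holesA A ++ holesAList rest
end

/-- `& ∈ T`: every continuation path of the tree of `T` contains a branching. -/
inductive BranchIn : SessionType → Prop where
  | bra : ∀ bs, BranchIn (.branch bs)
  | sel : ∀ bs, (∀ e ∈ bs, BranchIn e.2.2) → BranchIn (.select bs)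
  | mu : ∀ T, BranchIn T → BranchIn (.mu T)

/-- `& ∉ T`: some continuation path of the tree of `T` contains no branching. -/
inductive BranchNotIn : SessionType → Prop where
  | done : BranchNotIn .done
  | var : ∀ n, BranchNotIn (.var n)
  | sel : ∀ bs e, e ∈ bs → BranchNotIn e.2.2 → BranchNotIn (.select bs)
  | mu : ∀ T, BranchNotIn T → BranchNotIn (.mu T)

/-- `⊕ ∈ T`: every continuation path of the tree of `T` contains a selection. -/
inductive SelIn : SessionType → Prop where
  | sel : ∀ bs, SelIn (.select bs)
  | bra : ∀ bs, (∀ e ∈ bs, SelIn e.2.2) → SelIn (.branch bs)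
  | mu : ∀ T, SelIn T → SelIn (.mu T)

/-- `⊕ ∉ T`: some continuation path of the tree of `T` contains no selection. -/
inductive SelNotIn : SessionType → Prop where
  | done : SelNotIn .done
  | var : ∀ n, SelNotIn (.var n)
  | bra : ∀ bs e, e ∈ bs → SelNotIn e.2.2 → SelNotIn (.branch bs)
  | mu : ∀ T, SelNotIn T → SelNotIn (.mu T)

/-- One step of asynchronous subtyping: the synchronous rules together with
rule sub-perm-async. -/
def SubAF (R : SessionType → SessionType → Prop) (T S : SessionType) : Prop :=
  SubSF R T S ∨
  (∃ (bs : List SEntry) (A : ACtx) (g : Nat → List SEntry),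
    T = .select bs ∧ S = fillA (fun n => .select (g n)) A ∧
    (∃ cbs, A = .branch cbs) ∧
    (∀ e ∈ bs, BranchIn e.2.2 ∧
      ∃ h : Nat → SEntry,
        (∀ n ∈ holesA A, h n ∈ g n ∧ (h n).1 = e.1 ∧ R (h n).2.1 e.2.1) ∧
        R e.2.2 (fillA (fun n => (h n).2.2) A)))

/-- Asynchronous session subtyping `≤a`: greatest fixpoint of `SubAF`. -/
def SubA (T S : SessionType) : Prop :=
  ∃ R, R T S ∧ ∀ a b, R a b → SubAF R a b

/-- The inductive negation `⋪s` of synchronous subtyping (Table 9),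
with μ-unfolding steps for the equi-recursive reading. -/
inductive NSubS : SessionType → SessionType → Prop where
  | endR : ∀ T, T ≠ .done → NSubS .done T
  | endL : ∀ T, T ≠ .done → NSubS T .done
  | brasel : ∀ bs bs', NSubS (.branch bs) (.select bs')
  | selbra : ∀ bs bs', NSubS (.select bs) (.branch bs')
  | labelBra : ∀ bs bs' e', e' ∈ bs' → (∀ e ∈ bs, e.1 ≠ e'.1) →
      NSubS (.branch bs) (.branch bs')
  | labelSel : ∀ bs bs' e, e ∈ bs → (∀ e' ∈ bs', e.1 ≠ e'.1) →
      NSubS (.select bs) (.select bs')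
  | exchBra : ∀ bs bs' e e', e ∈ bs → e' ∈ bs' → e.1 = e'.1 →
      NSubS e.2.1 e'.2.1 → NSubS (.branch bs) (.branch bs')
  | exchSel : ∀ bs bs' e e', e ∈ bs → e' ∈ bs' → e.1 = e'.1 →
      NSubS e'.2.1 e.2.1 → NSubS (.select bs) (.select bs')
  | contBra : ∀ bs bs' e e', e ∈ bs → e' ∈ bs' → e.1 = e'.1 →
      NSubS e.2.2 e'.2.2 → NSubS (.branch bs) (.branch bs')
  | contSel : ∀ bs bs' e e', e ∈ bs → e' ∈ bs' → e.1 = e'.1 →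
      NSubS e.2.2 e'.2.2 → NSubS (.select bs) (.select bs')
  | muL : ∀ T S, NSubS (unfoldMu T) S → NSubS (.mu T) S
  | muR : ∀ T S, NSubS T (unfoldMu S) → NSubS T (.mu S)

/-- The inductive negation `⋪a` of asynchronous subtyping: the synchronous
negation rules except selection-⋪-branching, plus the five asynchronous rules.
The boolean flag records whether the rules n-bra-async and n-sel-async may be used
(`NSubA false` is derivability without those two rules). -/
inductive NSubA : Bool → SessionType → SessionType → Prop where
  | endR : ∀ b T, T ≠ .done → NSubA b .done T
  | endL : ∀ b T, T ≠ .done → NSubA b T .done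
  | brasel : ∀ b bs bs', NSubA b (.branch bs) (.select bs')
  | labelBra : ∀ b bs bs' e', e' ∈ bs' → (∀ e ∈ bs, e.1 ≠ e'.1) →
      NSubA b (.branch bs) (.branch bs')
  | labelSel : ∀ b bs bs' e, e ∈ bs → (∀ e' ∈ bs', e.1 ≠ e'.1) →
      NSubA b (.select bs) (.select bs')
  | exchBra : ∀ b bs bs' e e', e ∈ bs → e' ∈ bs' → e.1 = e'.1 →
      NSubA b e.2.1 e'.2.1 → NSubA b (.branch bs) (.branch bs')
  | exchSel : ∀ b bs bs' e e', e ∈ bs → e' ∈ bs' → e.1 = e'.1 →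
      NSubA b e'.2.1 e.2.1 → NSubA b (.select bs) (.select bs')
  | contBra : ∀ b bs bs' e e', e ∈ bs → e' ∈ bs' → e.1 = e'.1 →
      NSubA b e.2.2 e'.2.2 → NSubA b (.branch bs) (.branch bs')
  | contSel : ∀ b bs bs' e e', e ∈ bs → e' ∈ bs' → e.1 = e'.1 →
      NSubA b e.2.2 e'.2.2 → NSubA b (.select bs) (.select bs')
  | labelAsync : ∀ b bs (A : ACtx) (g : Nat → List SEntry) e n,
      e ∈ bs → n ∈ holesA A → (∀ e' ∈ g n, e'.1 ≠ e.1) →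
      NSubA b (.select bs) (fillA (fun m => .select (g m)) A)
  | exchAsync : ∀ b bs (A : ACtx) (g : Nat → List SEntry) e n e',
      e ∈ bs → n ∈ holesA A → e' ∈ g n → e'.1 = e.1 →
      NSubA b e'.2.1 e.2.1 →
      NSubA b (.select bs) (fillA (fun m => .select (g m)) A)
  | contAsync : ∀ b bs (A : ACtx) (g : Nat → List SEntry)
      (j : SEntry → Nat → SEntry) e₀,
      (∀ e ∈ bs, ∀ n ∈ holesA A, j e n ∈ g n ∧ (j e n).1 = e.1) →
      e₀ ∈ bs →
      NSubA b e₀.2.2 (fillA (fun n => (j e₀ n).2.2) A) →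
      NSubA b (.select bs) (fillA (fun m => .select (g m)) A)
  | braAsync : ∀ T bs, BranchNotIn T → NSubA true T (.branch bs)
  | selAsync : ∀ bs T, SelNotIn T → NSubA true (.select bs) T
  | muL : ∀ b T S, NSubA b (unfoldMu T) S → NSubA b (.mu T) S
  | muR : ∀ b T S, NSubA b T (unfoldMu S) → NSubA b T (.mu S)


theorem branchIn_not_branchNotIn : ∀ {T}, BranchIn T → BranchNotIn T → False := by
  intro T h
  induction h with
  | bra bs => intro hn; cases hn
  | sel bs h ih =>
      intro hn
      cases hn with
      | sel _ e he hne => exact ih e he hne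
  | mu T h ih =>
      intro hn
      cases hn with
      | mu _ hn => exact ih hn

mutual
theorem branchIn_total : ∀ T : SessionType, BranchIn T ∨ BranchNotIn T
  | .done => .inr .done
  | .var n => .inr (.var n)
  | .branch bs => .inl (.bra bs)
  | .mu T =>
      match branchIn_total T with
      | .inl h => .inl (.mu T h)
      | .inr h => .inr (.mu T h)
  | .select bs =>
      match branchIn_totalList bs with
      | .inl h => .inl (.sel bs h)
      | .inr ⟨e, he, hn⟩ => .inr (.sel bs e he hn)
termination_by T => sizeOf T

theorem branchIn_totalList : ∀ bs : List SEntry,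
    (∀ e ∈ bs, BranchIn e.2.2) ∨ (∃ e ∈ bs, BranchNotIn e.2.2)
  | [] => .inl (by simp)
  | (l, s, t) :: rest =>
      match branchIn_total t, branchIn_totalList rest with
      | .inl h, .inl hs => .inl (by
          intro e he
          rcases List.mem_cons.mp he with rfl | he
          · exact h
          · exact hs e he)
      | .inr h, _ => .inr ⟨(l, s, t), List.mem_cons_self, h⟩
      | _, .inr ⟨e, he, hn⟩ => .inr ⟨e, List.mem_cons_of_mem _ he, hn⟩
termination_by bs => sizeOf bs
end

/-- For every closed session type, exactly one of `& ∈ T` and `& ∉ T` holds. -/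
theorem branchIn_iff_not_branchNotIn : ∀ T : SessionType, ClosedTy T →
    (BranchIn T ↔ ¬ BranchNotIn T) := by
  intro T _
  constructor
  · intro h hn; exact branchIn_not_branchNotIn h hn
  · intro hn
    rcases branchIn_total T with h | h
    · exact h
    · exact absurd h hn
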